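/- arXiv:1207.6141 — 2 statements merged into one kernel-verified Lean document; each statement's English description precedes it below -/
import Mathlib

section
/- Every bipartite graph is M'-contractible. -/
open SimpleGraph

/-- An `H`-scheme in `G`, where the embedding `f` identifies the vertices of `H`
with vertices of `G`.  It is a collection of paths `P_{uv}` in `G`, one for each
edge `uv` of `H`, such that `P_{uv}` is a `u,v`-path meeting `V(H)` exactly in
`{u, v}`, and any collection of edges of `H` whose paths share a common vertex
of `G` must have a common endpoint in `H`. -/
structure HScheme {α β : Type} (H : SimpleGraph α) (G : SimpleGraph β) (f : α ↪ β) where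
  path : ∀ u v, H.Adj u v → G.Walk (f u) (f v)
  path_symm : ∀ u v (h : H.Adj u v), path v u h.symm = (path u v h).reverse
  path_isPath : ∀ u v (h : H.Adj u v), (path u v h).IsPath
  root_mem : ∀ u v (h : H.Adj u v) (w : α), f w ∈ (path u v h).support → w = u ∨ w = v
  common_endpoint : ∀ x : β,
    (∃ u v, ∃ h : H.Adj u v, x ∈ (path u v h).support) →
    ∃ z : α, ∀ u v (h : H.Adj u v), x ∈ (path u v h).support → z = u ∨ z = v

/-- `G` contains `H` as a rooted minor: pairwise disjoint connected branch sets
`C v ⊆ V(G)`, one for each vertex `v` of `H`, with `f v ∈ C v`, such that for every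
edge `uv` of `H` there is an edge of `G` between `C u` and `C v`. -/
def RootedMinor {α β : Type} (H : SimpleGraph α) (G : SimpleGraph β) (f : α ↪ β) : Prop :=
  ∃ C : α → Set β,
    (∀ v, f v ∈ C v) ∧
    (∀ v, (G.induce (C v)).Connected) ∧
    (Pairwise fun u v => Disjoint (C u) (C v)) ∧
    (∀ u v, H.Adj u v → ∃ x ∈ C u, ∃ y ∈ C v, G.Adj x y)

/-- `G` contains `H` as a minor: pairwise disjoint connected branch sets, one for each
vertex of `H`, such that for every edge `uv` of `H` there is an edge of `G` between the
corresponding branch sets. -/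
def HasMinor {β α : Type} (G : SimpleGraph β) (H : SimpleGraph α) : Prop :=
  ∃ C : α → Set β,
    (∀ v, (G.induce (C v)).Connected) ∧
    (Pairwise fun u v => Disjoint (C u) (C v)) ∧
    (∀ u v, H.Adj u v → ∃ x ∈ C u, ∃ y ∈ C v, G.Adj x y)

/-- `H` is rooted-contractible: every (finite) graph `G` containing an `H`-scheme
contains `H` as a rooted minor. -/
def IsRootedContractible {α : Type} (H : SimpleGraph α) : Prop :=
  ∀ (β : Type) [Fintype β] (G : SimpleGraph β) (f : α ↪ β),
    Nonempty (HScheme H G f) → RootedMinor H G f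

/-- `H` is weakly rooted-contractible: every (finite) graph `G` containing an
`H`-scheme contains `H` as a minor. -/
def IsWeaklyRootedContractible {α : Type} (H : SimpleGraph α) : Prop :=
  ∀ (β : Type) [Fintype β] (G : SimpleGraph β) (f : α ↪ β),
    Nonempty (HScheme H G f) → HasMinor G H

/-- The graph `M'(H)`: vertices are `(v, i)` for `v ∈ V(H)` and `i ∈ {1,2}` (here
`false` plays the role of `1` and `true` the role of `2`); `(u,i)` is adjacent to
`(v,j)` iff `uv ∈ E(H)` and at least one of `i, j` equals `2`. -/
def Mprime {α : Type} (H : SimpleGraph α) : SimpleGraph (α × Bool) where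
  Adj x y := H.Adj x.1 y.1 ∧ (x.2 = true ∨ y.2 = true)
  symm := by
    constructor
    intro x y h
    exact ⟨h.1.symm, h.2.symm⟩
  loopless := by
    constructor
    intro x h
    exact H.loopless.irrefl x.1 h.1

/-- `H` is M'-contractible: `M'(H)` contains `H` as a rooted minor with each vertex
`v` of `H` rooted at `v₁ = (v, false)`. -/
def MprimeContractible {α : Type} (H : SimpleGraph α) : Prop :=
  ∃ C : α → Set (α × Bool),
    (∀ v, (v, false) ∈ C v) ∧
    (∀ v, ((Mprime H).induce (C v)).Connected) ∧
    (Pairwise fun u v => Disjoint (C u) (C v)) ∧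
    (∀ u v, H.Adj u v → ∃ x ∈ C u, ∃ y ∈ C v, (Mprime H).Adj x y)

/-- The set of neighbors of a set `S` of vertices. -/
def setNeighbors {α : Type} (H : SimpleGraph α) (S : Set α) : Set α :=
  {w | ∃ v ∈ S, H.Adj v w}

/-- `S` is a stable (independent) set in `H`. -/
def IsStableSet {α : Type} (H : SimpleGraph α) (S : Set α) : Prop :=
  ∀ u ∈ S, ∀ v ∈ S, ¬ H.Adj u v

/-- `H` has a shift automorphism: an automorphism `π` with every vertex `v`
adjacent to `π v`.  (The graph with no vertices trivially has one.) -/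
def HasShiftAutomorphism {α : Type} (H : SimpleGraph α) : Prop :=
  ∃ π : α ≃ α, (∀ a b, H.Adj a b → H.Adj (π a) (π b)) ∧ (∀ a, H.Adj a (π a))

/-- The set `S` induces an M'-contraction in `H`: there is a matching among the
edges between `S` and `N(S)` covering every vertex of `N(S)` (encoded by a map `g`
assigning to each `w ∈ N(S)` its partner `g w ∈ S`, injectively), and the induced
subgraph `H − (S ∪ N(S))` has a shift automorphism. -/
def InducesMprimeContraction {α : Type} (H : SimpleGraph α) (S : Set α) : Prop :=
  (∃ g : α → α, Set.InjOn g (setNeighbors H S) ∧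
      ∀ w ∈ setNeighbors H S, g w ∈ S ∧ H.Adj (g w) w) ∧
  HasShiftAutomorphism (H.induce (S ∪ setNeighbors H S)ᶜ)

/-!
By König's theorem a bipartite graph has a vertex cover `D` together with an injection `b` of `D`
into its complement with `v ~ b v`: in a minimum cover every stable `Y ⊆ D` satisfies Hall's
condition towards the outside of `D`, and `D` splits into two stable parts whose partners lie on
opposite sides of the bipartition. The branch set of `v` is `{v₁}` for `v ∉ D` and
`{v₁, v₂, (b v)₂}` for `v ∈ D`: there `(b v)₂` is adjacent to both `v₁` and `v₂`, injectivity of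
`b` together with `b v ∉ D` keeps the branch sets disjoint, and an edge `uv` of `H` with `u ∈ D`
is realised by `u₂v₁`.
-/

open Finset

namespace SimpleGraph

variable {V : Type*} {G : SimpleGraph V}

lemma induce_connected_of_forall_adj {s : Set V} {c : V} (hc : c ∈ s)
    (h : ∀ x ∈ s, x ≠ c → G.Adj x c) : (G.induce s).Connected := by
  rw [connected_iff_exists_forall_reachable]
  refine ⟨⟨c, hc⟩, fun ⟨x, hx⟩ => ?_⟩
  by_cases hxc : x = c
  · subst hxc; rfl
  · exact (Adj.reachable (by simpa using h x hx hxc)).symm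

variable [Fintype V]

/-- Exchanging `Y` for its neighbours outside `D` yields another vertex cover, so a minimum
cover cannot gain from the exchange. -/
lemma IsVertexCover.card_le_card_neighbors_outside [DecidableEq V] [DecidableRel G.Adj]
    {D Y : Finset V} (hD : G.IsVertexCover D)
    (hmin : ∀ D' : Finset V, G.IsVertexCover D' → #D ≤ #D') (hYD : Y ⊆ D)
    (hY : G.IsIndepSet Y) : #Y ≤ #{w | ∃ v ∈ Y, G.Adj v w ∧ w ∉ D} := by
  set N : Finset V := {w | ∃ v ∈ Y, G.Adj v w ∧ w ∉ D}
  have hcover : G.IsVertexCover ↑(D \ Y ∪ N) := by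
    suffices key : ∀ {x y}, G.Adj x y → x ∈ D → x ∈ D \ Y ∪ N ∨ y ∈ D \ Y ∪ N by
      intro u v huv
      simp only [mem_coe]
      rcases hD huv with hu | hv
      · exact key huv hu
      · exact (key huv.symm hv).symm
    intro x y hxy hx
    by_cases hxY : x ∈ Y
    · right
      by_cases hyD : y ∈ D
      · have hyY : y ∉ Y := fun hyY => hY hxY hyY hxy.ne hxy
        simp [hyD, hyY]
      · simpa [N, hyD] using ⟨x, hxY, hxy⟩
    · left
      simp [hx, hxY]
  have h1 := hmin _ hcover
  have h2 := card_union_le (D \ Y) N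
  have h3 := card_sdiff_of_subset hYD
  have h4 := card_le_card hYD
  omega

lemma IsVertexCover.exists_injOn_adj_notMem {D : Finset V} (hD : G.IsVertexCover D)
    (hmin : ∀ D' : Finset V, G.IsVertexCover D' → #D ≤ #D') {Y : Set V} (hYD : Y ⊆ D)
    (hY : G.IsIndepSet Y) :
    ∃ b : V → V, Set.InjOn b Y ∧ ∀ v ∈ Y, G.Adj v (b v) ∧ b v ∉ D := by
  classical
  obtain ⟨f, hf, hfY⟩ := (Fintype.all_card_le_filter_rel_iff_exists_injective
    (fun (v : Y) w => G.Adj v w ∧ w ∉ D)).1 fun A => by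
      have hA : ↑(A.map (Function.Embedding.subtype _)) ⊆ Y := by simp
      simpa using hD.card_le_card_neighbors_outside hmin (hA.trans hYD) (hY.mono hA)
  refine ⟨fun v => if h : v ∈ Y then f ⟨v, h⟩ else v, ?_,
    fun v hv => by simpa [hv] using hfY ⟨v, hv⟩⟩
  rw [Set.injOn_iff_injective]
  convert hf using 1
  ext ⟨v, hv⟩
  simp [hv]

theorem exists_isVertexCover_injOn_adj_notMem {S : Set V} (hS : G.IsIndepSet S)
    (hSc : G.IsIndepSet Sᶜ) :
    ∃ (D : Set V) (b : V → V), G.IsVertexCover D ∧ Set.InjOn b D ∧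
      ∀ v ∈ D, G.Adj v (b v) ∧ b v ∉ D := by
  classical
  obtain ⟨D, hD, hmin⟩ : ∃ D : Finset V, G.IsVertexCover D ∧
      ∀ D' : Finset V, G.IsVertexCover D' → #D ≤ #D' := by
    obtain ⟨D, hD, hmin⟩ := exists_min_image {D : Finset V | G.IsVertexCover D} card
      ⟨univ, by simp⟩
    exact ⟨D, (mem_filter.1 hD).2, fun D' hD' => hmin D' (by simpa using hD')⟩
  obtain ⟨b₁, hb₁, hb₁D⟩ := hD.exists_injOn_adj_notMem hmin (Y := D ∩ S)
    Set.inter_subset_left (hS.mono Set.inter_subset_right)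
  obtain ⟨b₂, hb₂, hb₂D⟩ := hD.exists_injOn_adj_notMem hmin (Y := D ∩ Sᶜ)
    Set.inter_subset_left (hSc.mono Set.inter_subset_right)
  refine ⟨D, fun v => if v ∈ S then b₁ v else b₂ v, hD, ?_, fun v hv => ?_⟩
  · have hb₁S : ∀ v ∈ (D : Set V) ∩ S, b₁ v ∉ S := fun v hv hbv =>
      hS hv.2 hbv (hb₁D v hv).1.ne (hb₁D v hv).1
    have hb₂S : ∀ v ∈ (D : Set V) ∩ Sᶜ, b₂ v ∈ S := fun v hv => by
      by_contra hbv
      exact hSc hv.2 hbv (hb₂D v hv).1.ne (hb₂D v hv).1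
    intro u hu v hv huv
    by_cases huS : u ∈ S <;> by_cases hvS : v ∈ S <;>
      simp only [huS, hvS, if_true, if_false] at huv
    · exact hb₁ ⟨hu, huS⟩ ⟨hv, hvS⟩ huv
    · exact (hb₁S u ⟨hu, huS⟩ (huv ▸ hb₂S v ⟨hv, hvS⟩)).elim
    · exact (hb₁S v ⟨hv, hvS⟩ (huv ▸ hb₂S u ⟨hu, huS⟩)).elim
    · exact hb₂ ⟨hu, huS⟩ ⟨hv, hvS⟩ huv
  · by_cases hvS : v ∈ S
    · simpa [hvS] using hb₁D v ⟨hv, hvS⟩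
    · simpa [hvS] using hb₂D v ⟨hv, hvS⟩

end SimpleGraph

section MprimeBranchSets

variable {α : Type} {H : SimpleGraph α} {D : Set α} {b : α → α}

def mprimeBranchSet (D : Set α) (b : α → α) (v : α) : Set (α × Bool) :=
  insert (v, false) {p | v ∈ D ∧ (p = (v, true) ∨ p = (b v, true))}

lemma connected_induce_mprimeBranchSet (hb : ∀ v ∈ D, H.Adj v (b v)) (v : α) :
    ((Mprime H).induce (mprimeBranchSet D b v)).Connected := by
  by_cases hv : v ∈ D
  · refine induce_connected_of_forall_adj (c := (b v, true)) (.inr ⟨hv, .inr rfl⟩) ?_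
    rintro x (rfl | ⟨-, rfl | rfl⟩) hne
    · exact ⟨hb v hv, .inr rfl⟩
    · exact ⟨hb v hv, .inl rfl⟩
    · exact absurd rfl hne
  · refine induce_connected_of_forall_adj (Set.mem_insert _ _) ?_
    rintro x (rfl | ⟨hv', -⟩) hne
    · exact absurd rfl hne
    · exact absurd hv' hv

lemma pairwise_disjoint_mprimeBranchSet (hb : Set.InjOn b D) (hbD : ∀ v ∈ D, b v ∉ D) :
    Pairwise fun u v => Disjoint (mprimeBranchSet D b u) (mprimeBranchSet D b v) := by
  intro u v huv
  rw [Set.disjoint_left]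
  rintro ⟨w, i⟩ hu hv
  simp only [mprimeBranchSet, Set.mem_insert_iff, Set.mem_ofPred_eq, Prod.mk.injEq] at hu hv
  grind [Set.InjOn]

lemma exists_adj_mprimeBranchSet (hD : H.IsVertexCover D) {u v : α} (huv : H.Adj u v) :
    ∃ x ∈ mprimeBranchSet D b u, ∃ y ∈ mprimeBranchSet D b v, (Mprime H).Adj x y := by
  rcases hD huv with hu | hv
  · exact ⟨(u, true), .inr ⟨hu, .inl rfl⟩, (v, false), .inl rfl, huv, .inl rfl⟩
  · exact ⟨(u, false), .inl rfl, (v, true), .inr ⟨hv, .inl rfl⟩, huv, .inr rfl⟩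

theorem mprimeContractible_of_isVertexCover (hD : H.IsVertexCover D) (hb : Set.InjOn b D)
    (hbD : ∀ v ∈ D, H.Adj v (b v) ∧ b v ∉ D) : MprimeContractible H :=
  ⟨mprimeBranchSet D b, fun _ => .inl rfl,
    connected_induce_mprimeBranchSet fun v hv => (hbD v hv).1,
    pairwise_disjoint_mprimeBranchSet hb fun v hv => (hbD v hv).2,
    fun _ _ => exists_adj_mprimeBranchSet hD⟩

end MprimeBranchSets

/-- Every bipartite graph is M'-contractible. -/
theorem bipartite_mprime_contractible {α : Type} [Fintype α] (H : SimpleGraph α)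
    (hbip : ∃ S : Set α, IsStableSet H S ∧ IsStableSet H Sᶜ) :
    MprimeContractible H := by
  obtain ⟨S, hS, hSc⟩ := hbip
  obtain ⟨D, b, hD, hb, hbD⟩ := exists_isVertexCover_injOn_adj_notMem
    (fun u hu v hv _ => hS u hu v hv) (fun u hu v hv _ => hSc u hu v hv)
  exact mprimeContractible_of_isVertexCover hD hb hbD
end

section
/- Let H be a graph containing a triangle on vertices u, v, w such that u and v each have degree 2 in H. Then H is rooted-contractible if and only if H − {u, v} (the graph obtained from H by deleting u and v) is rooted-contractible. -/
/-!
Forward direction: attach `u` and `v` to the host graph of an `H - {u, v}`-scheme as two new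
adjacent vertices joined to the root of `w`. The triangle edges become single edges, so this is an
`H`-scheme, and the branch sets of a rooted `H`-minor of the enlarged graph that belong to
`H - {u, v}` avoid the two new roots, hence lie in the original graph.

Backward direction: given an `H`-scheme, let `K` be the component of the root of `w` in
`(P_uw ∪ P_vw) \ P_uv`. Deleting `P_uv` and contracting `K` onto the root of `w` leaves an
`H - {u, v}`-scheme (a path at `w` is cut after its last visit to `K`), and un-contracting its
rooted minor puts `K` into the branch set of `w`. Walking back from `K` along `P_uw` and `P_vw`
reaches `P_uv` in two distinct vertices adjacent to `K`, since no vertex lies on all three paths.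
Cutting `P_uv` between them yields the branch sets of `u` and `v`.
-/

open SimpleGraph

namespace SimpleGraph

variable {V W : Type*} {G : SimpleGraph V}

namespace Walk

theorem exists_eq_append_cons_of_mem_of_mem {N : Set V} {a b x y : V} (p : G.Walk a b)
    (hx : x ∈ p.support) (hy : y ∈ p.support) (hxN : x ∈ N) (hyN : y ∈ N) (hxy : x ≠ y) :
    ∃ (c d : V) (q : G.Walk a c) (h : G.Adj c d) (r : G.Walk d b),
      p = q.append (cons h r) ∧ (∃ x ∈ q.support, x ∈ N) ∧ ∃ y ∈ r.support, y ∈ N := by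
  induction p with
  | nil => simp_all
  | @cons a a' b h p ih =>
    by_cases ha : a ∈ N
    · obtain ⟨z, hz, hzN⟩ : ∃ z ∈ p.support, z ∈ N := by
        rcases eq_or_ne x a with rfl | hxa
        · exact ⟨y, by simpa [hxy.symm] using hy, hyN⟩
        · exact ⟨x, by simpa [hxa] using hx, hxN⟩
      exact ⟨a, a', nil, h, p, rfl, ⟨a, by simp, ha⟩, z, hz, hzN⟩
    · have hxa : x ≠ a := by rintro rfl; exact ha hxN
      have hya : y ≠ a := by rintro rfl; exact ha hyN
      obtain ⟨c, d, q, h', r, rfl, hq, hr⟩ :=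
        ih (by simpa [hxa] using hx) (by simpa [hya] using hy)
      exact ⟨c, d, cons h q, h', r, rfl, by simpa using Or.inr hq, hr⟩

theorem exists_eq_append_cons_of_mem_of_notMem {K : Set V} {a b : V} (p : G.Walk a b)
    (hK : ∃ x ∈ p.support, x ∈ K) (hb : b ∉ K) :
    ∃ k ∈ K, ∃ (c : V) (p₁ : G.Walk a k) (h : G.Adj k c) (q : G.Walk c b),
      p = p₁.append (cons h q) ∧ ∀ x ∈ q.support, x ∉ K := by
  induction p with
  | nil => obtain ⟨x, hx, hxK⟩ := hK; simp_all
  | @cons a a' b h p ih =>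
    by_cases hp : ∃ x ∈ p.support, x ∈ K
    · obtain ⟨k, hk, c, p₁, h', q, rfl, hq⟩ := ih hp hb
      exact ⟨k, hk, c, cons h p₁, h', q, rfl, hq⟩
    · push Not at hp
      have ha : a ∈ K := by
        obtain ⟨x, hx, hxK⟩ := hK
        rcases List.mem_cons.mp (support_cons h p ▸ hx) with rfl | hx
        · exact hxK
        · exact absurd hxK (hp x hx)
      exact ⟨a, ha, a', nil, h, p, rfl, hp⟩

theorem IsPath.disjoint_support_of_append_cons {a c d b : V} {q : G.Walk a c} {h : G.Adj c d}
    {r : G.Walk d b} (hp : (q.append (cons h r)).IsPath) : q.support.Disjoint r.support := by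
  have := hp.support_nodup
  rw [support_append, support_cons, List.tail_cons] at this
  exact List.disjoint_of_nodup_append this

theorem exists_support_eq {G' : SimpleGraph V} {a b : V} (p : G.Walk a b)
    (h : ∀ x ∈ p.support, ∀ y ∈ p.support, G.Adj x y → G'.Adj x y) :
    ∃ q : G'.Walk a b, q.support = p.support :=
  ⟨p.transfer G' fun e he => by
      induction e using Sym2.ind with
      | _ x y =>
        exact h x (p.fst_mem_support_of_mem_edges he) y (p.snd_mem_support_of_mem_edges he)
          (p.adj_of_mem_edges he),
    support_transfer _ _⟩

end Walk

def componentIn (G : SimpleGraph V) (M : Set V) (c : V) : Set V :=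
  {t | ∃ p : G.Walk c t, ∀ x ∈ p.support, x ∈ M}

section componentIn

variable {M : Set V} {c : V}

theorem mem_componentIn_self (hc : c ∈ M) : c ∈ G.componentIn M c :=
  ⟨Walk.nil, by simpa using hc⟩

theorem componentIn_subset : G.componentIn M c ⊆ M :=
  fun _ ⟨p, hp⟩ => hp _ p.end_mem_support

theorem mem_componentIn_of_adj {k t : V} (hk : k ∈ G.componentIn M c) (h : G.Adj k t)
    (ht : t ∈ M) : t ∈ G.componentIn M c := by
  obtain ⟨p, hp⟩ := hk
  refine ⟨p.concat h, fun x hx => ?_⟩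
  rcases List.mem_append.mp (p.support_concat h ▸ hx) with hx | hx
  · exact hp x hx
  · exact (List.mem_singleton.mp hx) ▸ ht

theorem connected_induce_componentIn (hc : c ∈ M) : (G.induce (G.componentIn M c)).Connected := by
  refine G.induce_connected_of_patches c (mem_componentIn_self hc) fun {t} ⟨p, hp⟩ => ?_
  refine ⟨{x | x ∈ p.support}, fun x hx => ?_, p.start_mem_support, p.end_mem_support,
    p.connected_induce_support.preconnected _ _⟩
  classical
  exact ⟨p.takeUntil x hx, fun y hy => hp y (p.support_takeUntil_subset_support hx hy)⟩

theorem exists_adj_notMem_of_notMem_componentIn {b : V} (p : G.Walk c b) (hc : c ∈ M)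
    (hb : b ∉ G.componentIn M c) :
    ∃ k ∈ G.componentIn M c, ∃ t ∈ p.support, t ∉ M ∧ G.Adj k t := by
  obtain ⟨k, hk, t, p₁, h, q, rfl, hq⟩ :=
    p.exists_eq_append_cons_of_mem_of_notMem ⟨c, p.start_mem_support, mem_componentIn_self hc⟩ hb
  refine ⟨k, hk, t, by simp, fun htM => hq t q.start_mem_support ?_, h⟩
  exact mem_componentIn_of_adj hk h htM

end componentIn

def isolate (G : SimpleGraph V) (P : Set V) : SimpleGraph V where
  Adj a b := G.Adj a b ∧ a ∉ P ∧ b ∉ P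
  symm.symm _ _ h := ⟨h.1.symm, h.2.2, h.2.1⟩

theorem isolate_le (P : Set V) : G.isolate P ≤ G := fun _ _ h => h.1

theorem connected_induce_isolate {P K : Set V} (hK : (G.induce K).Connected) (hPK : Disjoint K P) :
    ((G.isolate P).induce K).Connected :=
  hK.mono fun a b h => ⟨h, Set.disjoint_left.mp hPK a.2, Set.disjoint_left.mp hPK b.2⟩

theorem preconnected_induce_of_subsingleton {s : Set V} (hs : s.Subsingleton) :
    (G.induce s).Preconnected :=
  fun a b => Subtype.ext (hs a.2 b.2) ▸ Reachable.refl _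

open Classical in
/-- `G.map (contractMap K c)` contracts `K` onto `c`; the other vertices of `K` become isolated. -/
noncomputable def contractMap (K : Set V) (c : V) (x : V) : V := if x ∈ K then c else x

theorem contractMap_of_mem {K : Set V} {c x : V} (hx : x ∈ K) : contractMap K c x = c :=
  if_pos hx

theorem contractMap_of_notMem {K : Set V} {c x : V} (hx : x ∉ K) : contractMap K c x = x :=
  if_neg hx

theorem preconnected_induce_preimage_contractMap {K : Set V} {c : V} (hK : (G.induce K).Connected)
    (hc : c ∈ K) (y : V) : (G.induce (contractMap K c ⁻¹' {y})).Preconnected := by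
  by_cases hy : y = c
  · subst hy
    have : contractMap K y ⁻¹' {y} = K := by
      ext x
      by_cases hx : x ∈ K
      · simp [contractMap_of_mem hx, hx]
      · simp only [Set.mem_preimage, contractMap_of_notMem hx, Set.mem_singleton_iff, hx,
          iff_false]
        rintro rfl; exact hx hc
    rw [this]
    exact hK.preconnected
  · refine preconnected_induce_of_subsingleton
      ((Set.subsingleton_singleton (a := y)).anti fun x hx => ?_)
    by_cases hxK : x ∈ K
    · exact absurd ((contractMap_of_mem hxK).symm.trans hx).symm hy
    · exact contractMap_of_notMem hxK ▸ hx

theorem connected_induce_preimage {G' : SimpleGraph W} {π : V → W} {D : Set W} {z₀ : V}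
    (hlift : ∀ a ∈ D, ∀ b ∈ D, G'.Adj a b → ∃ a' b', G.Adj a' b' ∧ π a' = a ∧ π b' = b)
    (hfib : ∀ y ∈ D, (G.induce (π ⁻¹' {y})).Preconnected)
    (hD : (G'.induce D).Connected) (hz₀ : π z₀ ∈ D) :
    (G.induce (π ⁻¹' D)).Connected := by
  have fiber : ∀ z z' (hz : π z ∈ D) (hz' : π z' ∈ D), π z = π z' →
      (G.induce (π ⁻¹' D)).Reachable ⟨z, hz⟩ ⟨z', hz'⟩ := fun z z' hz hz' h =>
    (hfib _ hz ⟨z, rfl⟩ ⟨z', h.symm⟩).map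
      (G.induceHomOfLE fun x (hx : π x = π z) => show π x ∈ D from hx ▸ hz).toHom
  suffices ∀ b : D, (G'.induce D).Reachable ⟨π z₀, hz₀⟩ b →
      ∀ z (hz : π z ∈ D), π z = b → (G.induce (π ⁻¹' D)).Reachable ⟨z₀, hz₀⟩ ⟨z, hz⟩ by
    rw [connected_iff_exists_forall_reachable]
    exact ⟨⟨z₀, hz₀⟩, fun ⟨z, hz⟩ => this ⟨π z, hz⟩ (hD.preconnected _ _) z hz rfl⟩
  intro b hb
  rw [reachable_iff_reflTransGen] at hb
  induction hb with
  | refl => exact fun z hz h => fiber z₀ z hz₀ hz h.symm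
  | @tail a b _ hab ih =>
    intro z hz hzb
    obtain ⟨a', b', h, ha', hb'⟩ := hlift a a.2 b b.2 hab
    have ha'D : π a' ∈ D := ha' ▸ a.2
    have hb'D : π b' ∈ D := hb' ▸ b.2
    exact ((ih a' ha'D ha').trans (Adj.reachable (show (G.induce _).Adj ⟨a', ha'D⟩ ⟨b', hb'D⟩
      from h))).trans (fiber b' z hb'D hz (hb'.trans hzb.symm))

section Contract

variable {A K : Set V} {c : V}

theorem adj_isolate_map_contractMap {a b : V} (h : G.Adj a b) (ha : a ∉ A) (hb : b ∉ A)
    (hbK : b ∉ K) (hne : contractMap K c a ≠ b) :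
    ((G.isolate A).map (contractMap K c)).Adj (contractMap K c a) b := by
  have := map_adj_apply' (f := contractMap K c) (G := G.isolate A) ⟨h, ha, hb⟩
    (by rwa [contractMap_of_notMem hbK])
  rwa [contractMap_of_notMem hbK] at this

namespace Walk

theorem exists_support_eq_isolate_map_contractMap {a b : V} (p : G.Walk a b)
    (hA : ∀ t ∈ p.support, t ∉ A) (hK : ∀ t ∈ p.support, t ∉ K) :
    ∃ q : ((G.isolate A).map (contractMap K c)).Walk a b, q.support = p.support :=
  p.exists_support_eq fun x hx y hy h => by
    simpa [contractMap_of_notMem (hK x hx)] using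
      adj_isolate_map_contractMap (c := c) h (hA x hx) (hA y hy) (hK y hy)
        (by rw [contractMap_of_notMem (hK x hx)]; exact h.ne)

theorem exists_isPath_isolate_map_contractMap {b : V} (p : G.Walk c b) (hp : p.IsPath)
    (hc : c ∈ K) (hb : b ∉ K) (hA : ∀ t ∈ p.support, t ∉ A) (hKA : Disjoint K A) :
    ∃ q : ((G.isolate A).map (contractMap K c)).Walk c b,
      q.IsPath ∧ ∀ t ∈ q.support, t ∈ p.support := by
  obtain ⟨k, hk, d, p₁, hkd, r, rfl, hr⟩ :=
    p.exists_eq_append_cons_of_mem_of_notMem ⟨c, p.start_mem_support, hc⟩ hb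
  have hrp : ∀ t ∈ r.support, t ∈ (p₁.append (cons hkd r)).support := fun t ht => by
    simp [support_append, ht]
  obtain ⟨r', hr'⟩ := r.exists_support_eq_isolate_map_contractMap (c := c)
    (fun t ht => hA t (hrp t ht)) hr
  have hcd : ((G.isolate A).map (contractMap K c)).Adj c d := by
    have hdA := hA d (hrp d r.start_mem_support)
    simpa [contractMap_of_mem hk] using adj_isolate_map_contractMap (c := c) hkd
      (Set.disjoint_left.mp hKA hk) hdA (hr d r.start_mem_support)
      (by rw [contractMap_of_mem hk]; rintro rfl; exact hr _ r.start_mem_support hc)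
  refine ⟨cons hcd r', ?_, fun t ht => ?_⟩
  · refine IsPath.cons ?_ fun hc' => hr c (hr' ▸ hc') hc
    rw [isPath_def, hr']
    exact (isPath_def _).mp hp.of_append_right.of_cons
  · rcases List.mem_cons.mp (support_cons hcd r' ▸ ht) with rfl | ht
    · exact (p₁.append (cons hkd r)).start_mem_support
    · exact hrp t (hr' ▸ ht)

end Walk

end Contract

def withCliqueAt (G : SimpleGraph V) (T : Type*) (c : V) : SimpleGraph (V ⊕ T) where
  Adj
    | .inl a, .inl b => G.Adj a b
    | .inl a, .inr _ => a = c
    | .inr _, .inl b => b = c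
    | .inr i, .inr j => i ≠ j
  symm.symm := by
    rintro (a | i) (b | j) h
    exacts [h.symm, h, h, Ne.symm h]
  loopless.irrefl := by
    rintro (a | i) h
    exacts [G.loopless.irrefl a h, h rfl]

def inlWithCliqueAt (G : SimpleGraph V) (T : Type*) (c : V) : G ↪g G.withCliqueAt T c :=
  ⟨Function.Embedding.inl, Iff.rfl⟩

@[simp]
theorem inlWithCliqueAt_apply (G : SimpleGraph V) (T : Type*) (c a : V) :
    G.inlWithCliqueAt T c a = .inl a :=
  rfl

theorem eq_or_eq_of_adj_of_degree_eq_two {u v w x : V}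
    [Fintype (G.neighborSet u)] (hd : G.degree u = 2) (hv : G.Adj u v) (hw : G.Adj u w)
    (hvw : v ≠ w) (hx : G.Adj u x) : x = v ∨ x = w := by
  classical
  have hnbr : G.neighborFinset u = {v, w} := (Finset.eq_of_subset_of_card_le
    (by simp [Finset.insert_subset_iff, hv, hw])
    (by rw [card_neighborFinset_eq_degree, hd, Finset.card_pair hvw])).symm
  simpa [hnbr] using (G.mem_neighborFinset u x).mpr hx

end SimpleGraph

structure IsRootedModel {α β : Type*} (H : SimpleGraph α) (G : SimpleGraph β) (f : α ↪ β)
    (C : α → Set β) : Prop where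
  root_mem : ∀ x, f x ∈ C x
  connected : ∀ x, (G.induce (C x)).Connected
  pairwise_disjoint : Pairwise fun x y => Disjoint (C x) (C y)
  exists_adj : ∀ x y, H.Adj x y → ∃ a ∈ C x, ∃ b ∈ C y, G.Adj a b

theorem rootedMinor_iff_exists_isRootedModel {α β : Type} {H : SimpleGraph α}
    {G : SimpleGraph β} {f : α ↪ β} : RootedMinor H G f ↔ ∃ C, IsRootedModel H G f C :=
  ⟨fun ⟨C, h₁, h₂, h₃, h₄⟩ => ⟨C, ⟨h₁, h₂, h₃, h₄⟩⟩,
    fun ⟨C, ⟨h₁, h₂, h₃, h₄⟩⟩ => ⟨C, h₁, h₂, h₃, h₄⟩⟩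

namespace IsRootedModel

variable {α β γ : Type*} {H : SimpleGraph α} {G : SimpleGraph β} {f : α ↪ β} {C : α → Set β}

theorem eq_of_root_mem (hC : IsRootedModel H G f C) {x z : α} (h : f z ∈ C x) : x = z := by
  by_contra hxz
  exact Set.disjoint_left.mp (hC.pairwise_disjoint hxz) h (hC.root_mem z)

theorem notMem_of_forall_not_adj (hC : IsRootedModel H G f C) {t : β} {x : α}
    (ht : ∀ y, ¬ G.Adj t y) (hroot : t ≠ f x) : t ∉ C x := by
  intro htC
  obtain ⟨p⟩ := (hC.connected x).preconnected ⟨t, htC⟩ ⟨f x, hC.root_mem x⟩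
  exact ht _ (p.adj_snd (p.not_nil_of_ne fun h => hroot (congrArg Subtype.val h)))

theorem mono {G' : SimpleGraph β} (hC : IsRootedModel H G f C) (hle : G ≤ G') :
    IsRootedModel H G' f C where
  root_mem := hC.root_mem
  connected x := (hC.connected x).mono fun _ _ h => hle h
  pairwise_disjoint := hC.pairwise_disjoint
  exists_adj x y h :=
    let ⟨a, ha, b, hb, hab⟩ := hC.exists_adj x y h
    ⟨a, ha, b, hb, hle hab⟩

theorem induce (hC : IsRootedModel H G f C) (s : Set α) :
    IsRootedModel (H.induce s) G ((Function.Embedding.subtype _).trans f) fun x => C x where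
  root_mem x := hC.root_mem x
  connected x := hC.connected x
  pairwise_disjoint _ _ hxy := hC.pairwise_disjoint (Subtype.coe_injective.ne hxy)
  exists_adj x y h := hC.exists_adj x y h

theorem comap {G' : SimpleGraph γ} (hC : IsRootedModel H G f C) (e : G' ↪g G) (g : α ↪ γ)
    (hg : ∀ x, e (g x) = f x) (hrange : ∀ x, C x ⊆ Set.range e) :
    IsRootedModel H G' g fun x => e ⁻¹' C x where
  root_mem x := show e (g x) ∈ C x from hg x ▸ hC.root_mem x
  connected x := by
    refine G'.connected_induce_preimage (fun a ha b hb hab => ?_)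
      (fun y _ => G'.preconnected_induce_of_subsingleton
        (Set.subsingleton_singleton.preimage e.injective))
      (hC.connected x) (z₀ := g x) (show e (g x) ∈ C x from hg x ▸ hC.root_mem x)
    obtain ⟨a', rfl⟩ := hrange x ha
    obtain ⟨b', rfl⟩ := hrange x hb
    exact ⟨a', b', e.map_adj_iff.mp hab, rfl, rfl⟩
  pairwise_disjoint _ _ hxy := (hC.pairwise_disjoint hxy).preimage e
  exists_adj x y h := by
    obtain ⟨a, ha, b, hb, hab⟩ := hC.exists_adj x y h
    obtain ⟨a', rfl⟩ := hrange x ha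
    obtain ⟨b', rfl⟩ := hrange y hb
    exact ⟨a', ha, b', hb, e.map_adj_iff.mp hab⟩

theorem of_map {G' : SimpleGraph γ} {π : γ → β} (hC : IsRootedModel H (G'.map π) f C)
    (g : α ↪ γ) (hg : ∀ x, π (g x) = f x) (hfib : ∀ y, (G'.induce (π ⁻¹' {y})).Preconnected) :
    IsRootedModel H G' g fun x => π ⁻¹' C x where
  root_mem x := show π (g x) ∈ C x from hg x ▸ hC.root_mem x
  connected x := G'.connected_induce_preimage (fun _ _ _ _ hab => ((map_adj' _ _ _ _).mp hab).2)
    (fun y _ => hfib y)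
    (hC.connected x) (z₀ := g x) (show π (g x) ∈ C x from hg x ▸ hC.root_mem x)
  pairwise_disjoint _ _ hxy := (hC.pairwise_disjoint hxy).preimage π
  exists_adj x y h := by
    obtain ⟨a, ha, b, hb, hab⟩ := hC.exists_adj x y h
    obtain ⟨-, a', b', hab', rfl, rfl⟩ := (map_adj' _ _ _ _).mp hab
    exact ⟨a', ha, b', hb, hab'⟩

open Classical in
theorem glue {s : Set α} {D : s → Set β}
    (hD : IsRootedModel (H.induce s) G ((Function.Embedding.subtype _).trans f) D)
    {E : α → Set β} (hE_root : ∀ x ∉ s, f x ∈ E x)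
    (hE_conn : ∀ x ∉ s, (G.induce (E x)).Connected)
    (hE_disj : ∀ x ∉ s, ∀ y ∉ s, x ≠ y → Disjoint (E x) (E y))
    (hDE : ∀ x, ∀ y ∉ s, Disjoint (D x) (E y))
    (hE_adj : ∀ x ∉ s, ∀ y, H.Adj x y →
      ∃ a ∈ E x, ∃ b ∈ (if h : y ∈ s then D ⟨y, h⟩ else E y), G.Adj a b) :
    IsRootedModel H G f fun x => if h : x ∈ s then D ⟨x, h⟩ else E x where
  root_mem x := by
    by_cases hx : x ∈ s
    · simpa [hx] using hD.root_mem ⟨x, hx⟩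
    · simpa [hx] using hE_root x hx
  connected x := by
    by_cases hx : x ∈ s
    · rw [dif_pos hx]; exact hD.connected ⟨x, hx⟩
    · rw [dif_neg hx]; exact hE_conn x hx
  pairwise_disjoint x y hxy := by
    dsimp only
    by_cases hx : x ∈ s <;> by_cases hy : y ∈ s <;> simp only [hx, hy, dite_true, dite_false]
    · exact hD.pairwise_disjoint fun h => hxy (congrArg Subtype.val h)
    · exact hDE _ y hy
    · exact (hDE _ x hx).symm
    · exact hE_disj x hx y hy hxy
  exists_adj x y h := by
    by_cases hx : x ∈ s
    · by_cases hy : y ∈ s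
      · simpa [hx, hy] using hD.exists_adj ⟨x, hx⟩ ⟨y, hy⟩ h
      · obtain ⟨a, ha, b, hb, hab⟩ := hE_adj y hy x h.symm
        exact ⟨b, hb, a, by simpa [hy] using ha, hab.symm⟩
    · simpa [hx] using hE_adj x hx y h

end IsRootedModel

namespace HScheme

variable {α β γ : Type} {H : SimpleGraph α} {G : SimpleGraph β} {f : α ↪ β}

theorem exists_common_endpoint (S : HScheme H G f) {x y a b : α} (hxy : H.Adj x y)
    (hab : H.Adj a b) {t : β} (ht : t ∈ (S.path x y hxy).support)
    (ht' : t ∈ (S.path a b hab).support) : ∃ z, (z = x ∨ z = y) ∧ (z = a ∨ z = b) :=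
  let ⟨z, hz⟩ := S.common_endpoint t ⟨x, y, hxy, ht⟩
  ⟨z, hz x y hxy ht, hz a b hab ht'⟩

def map (S : HScheme H G f) {G' : SimpleGraph γ} (e : G ↪g G') (g : α ↪ γ)
    (hg : ∀ x, e (f x) = g x) : HScheme H G' g where
  path x y h := ((S.path x y h).map e.toHom).copy (hg x) (hg y)
  path_symm x y h := by rw [S.path_symm x y h, Walk.reverse_copy, Walk.reverse_map]
  path_isPath x y h := by
    rw [Walk.isPath_copy]
    exact (S.path_isPath x y h).map e.injective
  root_mem x y h z hz := S.root_mem x y h z <| by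
    rw [Walk.support_copy, Walk.support_map, ← hg z] at hz
    exact (List.mem_map_of_injective (f := e.toHom) e.injective).mp hz
  common_endpoint t := by
    rintro ⟨x, y, h, ht⟩
    rw [Walk.support_copy, Walk.support_map] at ht
    obtain ⟨t', ht', rfl⟩ := List.mem_map.mp ht
    obtain ⟨z, hz⟩ := S.common_endpoint t' ⟨x, y, h, ht'⟩
    refine ⟨z, fun a b hab hmem => hz a b hab ?_⟩
    rw [Walk.support_copy, Walk.support_map] at hmem
    exact (List.mem_map_of_injective (f := e.toHom) e.injective).mp hmem

theorem support_path_map (S : HScheme H G f) {G' : SimpleGraph γ} (e : G ↪g G') (g : α ↪ γ)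
    (hg : ∀ x, e (f x) = g x) (x y : α) (h : H.Adj x y) :
    ((S.map e g hg).path x y h).support = (S.path x y h).support.map e := by
  simp [map, Walk.support_copy, Walk.support_map]

/-- Orienting every edge by a well-order makes `path_symm` free, and at a root `f z` the
common-endpoint condition is witnessed by `z` through `hroot`. -/
theorem nonempty_of_paths (P : ∀ x y, H.Adj x y → G.Walk (f x) (f y))
    (hpath : ∀ x y h, (P x y h).IsPath)
    (hroot : ∀ x y h z, f z ∈ (P x y h).support → z = x ∨ z = y)
    (hcommon : ∀ t ∉ Set.range f, (∃ x y, ∃ h : H.Adj x y, t ∈ (P x y h).support) →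
      ∃ z, ∀ x y (h : H.Adj x y), t ∈ (P x y h).support → z = x ∨ z = y) :
    Nonempty (HScheme H G f) := by
  let : LinearOrder α := WellOrderingRel.isWellOrder.linearOrder
  let Q : ∀ x y, H.Adj x y → G.Walk (f x) (f y) := fun x y h =>
    if x < y then P x y h else (P y x h.symm).reverse
  have hQ : ∀ x y h t, t ∈ (Q x y h).support →
      t ∈ (P x y h).support ∨ t ∈ (P y x h.symm).support := by
    intro x y h t ht
    by_cases hxy : x < y
    · exact Or.inl (by simpa [Q, hxy] using ht)
    · exact Or.inr (by simpa [Q, hxy] using ht)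
  refine ⟨⟨Q, fun x y h => ?_, fun x y h => ?_, fun x y h z hz => ?_, fun t ht => ?_⟩⟩
  · rcases lt_or_gt_of_ne h.ne with hxy | hxy
    · simp [Q, hxy, hxy.not_gt]
    · simp [Q, hxy, hxy.not_gt]
  · by_cases hxy : x < y
    · simpa [Q, hxy] using hpath x y h
    · simpa [Q, hxy] using (hpath y x h.symm).reverse
  · rcases hQ x y h _ hz with hz | hz
    · exact hroot x y h z hz
    · exact (hroot y x h.symm z hz).symm
  · suffices ∃ z, ∀ x y (h : H.Adj x y), t ∈ (P x y h).support → z = x ∨ z = y by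
      obtain ⟨z, hz⟩ := this
      refine ⟨z, fun a b hab hmem => ?_⟩
      rcases hQ a b hab t hmem with hmem | hmem
      · exact hz a b hab hmem
      · exact (hz b a hab.symm hmem).symm
    by_cases htf : t ∈ Set.range f
    · obtain ⟨z, rfl⟩ := htf
      exact ⟨z, fun x y h ht => hroot x y h z ht⟩
    · obtain ⟨x, y, h, ht⟩ := ht
      exact hcommon t htf <| (hQ x y h t ht).elim (fun ht => ⟨x, y, h, ht⟩)
        fun ht => ⟨y, x, h.symm, ht⟩

theorem nonempty_induce_of_subpaths (S : HScheme H G f) (s : Set α) {G' : SimpleGraph β}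
    (hQ : ∀ x y (h : (H.induce s).Adj x y), ∃ Q : G'.Walk (f x) (f y),
      Q.IsPath ∧ ∀ t ∈ Q.support, t ∈ (S.path x y h).support) :
    Nonempty (HScheme (H.induce s) G' ((Function.Embedding.subtype _).trans f)) := by
  choose Q hQpath hQsub using hQ
  refine nonempty_of_paths Q hQpath (fun x y h z hz => ?_) fun t _ ⟨x₀, y₀, h₀, ht₀⟩ => ?_
  · exact (S.root_mem x y h z (hQsub x y h _ hz)).imp Subtype.ext Subtype.ext
  · obtain ⟨z, hz⟩ := S.common_endpoint t ⟨x₀, y₀, h₀, hQsub x₀ y₀ h₀ t ht₀⟩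
    have hzs : z ∈ s := by
      rcases hz x₀ y₀ h₀ (hQsub x₀ y₀ h₀ t ht₀) with rfl | rfl
      exacts [x₀.2, y₀.2]
    exact ⟨⟨z, hzs⟩, fun x y h ht =>
      (hz x y h (hQsub x y h t ht)).imp (fun h => Subtype.ext h) fun h => Subtype.ext h⟩

open Classical in
theorem nonempty_of_induce {s : Set α}
    (S : HScheme (H.induce s) G ((Function.Embedding.subtype _).trans f))
    (hadj : ∀ x y, H.Adj x y → x ∉ s → G.Adj (f x) (f y))
    (hout : ∀ x ∉ s, ∀ a b (h : (H.induce s).Adj a b), f x ∉ (S.path a b h).support) :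
    Nonempty (HScheme H G f) := by
  have hadj' : ∀ x y, H.Adj x y → ¬(x ∈ s ∧ y ∈ s) → G.Adj (f x) (f y) := by
    intro x y h hxy
    by_cases hx : x ∈ s
    · exact (hadj y x h.symm fun hy => hxy ⟨hx, hy⟩).symm
    · exact hadj x y h hx
  let P : ∀ x y, H.Adj x y → G.Walk (f x) (f y) := fun x y h =>
    if hxy : x ∈ s ∧ y ∈ s then (S.path ⟨x, hxy.1⟩ ⟨y, hxy.2⟩ h).copy rfl rfl
    else (hadj' x y h hxy).toWalk
  have hP : ∀ x y h t, t ∈ (P x y h).support → t = f x ∨ t = f y ∨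
      ∃ (hx : x ∈ s) (hy : y ∈ s), t ∈ (S.path ⟨x, hx⟩ ⟨y, hy⟩ h).support := by
    intro x y h t ht
    by_cases hxy : x ∈ s ∧ y ∈ s
    · simp only [P, dif_pos hxy] at ht
      exact Or.inr (Or.inr ⟨hxy.1, hxy.2, ht⟩)
    · simp only [P, dif_neg hxy, Adj.support_toWalk, List.mem_cons,
        List.not_mem_nil, or_false] at ht
      exact ht.imp_right Or.inl
  have hroot : ∀ x y h z, f z ∈ (P x y h).support → z = x ∨ z = y := by
    intro x y h z hz
    rcases hP x y h _ hz with hz | hz | ⟨hx, hy, hz⟩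
    · exact Or.inl (f.injective hz)
    · exact Or.inr (f.injective hz)
    · by_cases hzs : z ∈ s
      · exact (S.root_mem ⟨x, hx⟩ ⟨y, hy⟩ h ⟨z, hzs⟩ hz).imp (congrArg Subtype.val)
          (congrArg Subtype.val)
      · exact absurd hz (hout z hzs ⟨x, hx⟩ ⟨y, hy⟩ h)
  refine nonempty_of_paths P (fun x y h => ?_) hroot fun t htf ⟨x₀, y₀, h₀, ht₀⟩ => ?_
  · by_cases hxy : x ∈ s ∧ y ∈ s
    · simp only [P, dif_pos hxy]
      exact S.path_isPath ⟨x, hxy.1⟩ ⟨y, hxy.2⟩ h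
    · simp only [P, dif_neg hxy]
      exact (hadj' x y h hxy).isPath_toWalk
  · have hS : ∀ x y h, t ∈ (P x y h).support →
        ∃ (hx : x ∈ s) (hy : y ∈ s), t ∈ (S.path ⟨x, hx⟩ ⟨y, hy⟩ h).support := by
      intro x y h ht
      rcases hP x y h t ht with rfl | rfl | hS
      exacts [absurd ⟨x, rfl⟩ htf, absurd ⟨y, rfl⟩ htf, hS]
    obtain ⟨hx₀, hy₀, ht₀⟩ := hS x₀ y₀ h₀ ht₀
    obtain ⟨z, hz⟩ := S.common_endpoint t ⟨⟨x₀, hx₀⟩, ⟨y₀, hy₀⟩, h₀, ht₀⟩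
    refine ⟨z, fun x y h ht => ?_⟩
    obtain ⟨hx, hy, ht⟩ := hS x y h ht
    exact (hz ⟨x, hx⟩ ⟨y, hy⟩ h ht).imp (congrArg Subtype.val) (congrArg Subtype.val)

end HScheme

section Forward

variable {α : Type} [Finite α] {H : SimpleGraph α}

theorem IsRootedContractible.induce_of_forall_adj (hH : IsRootedContractible H) {s : Set α}
    {w : α} (hw : w ∈ s) (hadj : ∀ x ∉ s, ∀ y ∈ s, H.Adj x y → y = w) :
    IsRootedContractible (H.induce s) := by
  classical
  intro β _ G f ⟨S⟩
  have := Fintype.ofFinite (β ⊕ ↥sᶜ)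
  let F : α ↪ β ⊕ ↥sᶜ := (Equiv.Set.sumCompl s).symm.toEmbedding.trans (f.sumMap (.refl _))
  let e := G.inlWithCliqueAt ↥sᶜ (f ⟨w, hw⟩)
  have hFs : ∀ x : s, e (f x) = ((Function.Embedding.subtype _).trans F) x := fun x => by
    simp [F, e, Equiv.Set.sumCompl_symm_apply_of_mem x.2]
  have hFc : ∀ x (hx : x ∉ s), F x = .inr ⟨x, hx⟩ := fun x hx => by
    simp [F, Equiv.Set.sumCompl_symm_apply_of_notMem hx]
  have hscheme : Nonempty (HScheme H (G.withCliqueAt ↥sᶜ (f ⟨w, hw⟩)) F) := by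
    refine HScheme.nonempty_of_induce (S.map e _ hFs) (fun x y h hx => ?_) fun x hx a b h => ?_
    · rw [hFc x hx]
      by_cases hy : y ∈ s
      · rw [← show e (f ⟨y, hy⟩) = F y from hFs ⟨y, hy⟩]
        show f ⟨y, hy⟩ = f ⟨w, hw⟩
        simp only [hadj x hx y hy h]
      · rw [hFc y hy]
        exact fun hxy => h.ne (congrArg Subtype.val hxy)
    · rw [HScheme.support_path_map, hFc x hx]
      simp [e]
  obtain ⟨C, hC⟩ := rootedMinor_iff_exists_isRootedModel.mp (hH _ _ F hscheme)
  refine rootedMinor_iff_exists_isRootedModel.mpr ⟨_, (hC.induce s).comap e f hFs ?_⟩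
  rintro x (a | ⟨z, hz⟩) ha
  · exact ⟨a, rfl⟩
  · rw [← hFc z hz] at ha
    exact absurd (hC.eq_of_root_mem ha ▸ x.2) hz

end Forward

namespace HScheme

variable {α β : Type} {H : SimpleGraph α} {G : SimpleGraph β} {f : α ↪ β} {u v w : α}

def verts (S : HScheme H G f) (x y : α) (h : H.Adj x y) : Set β :=
  {t | t ∈ (S.path x y h).support}

theorem root_notMem_verts (S : HScheme H G f) (huv : H.Adj u v) {x : α}
    (hx : x ∈ ({u, v} : Set α)ᶜ) : f x ∉ S.verts u v huv := fun h => by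
  rcases S.root_mem u v huv x h with rfl | rfl <;> simp at hx

theorem eq_of_root_mem_verts_union (S : HScheme H G f) (huw : H.Adj u w) (hvw : H.Adj v w)
    {x : α} (hx : x ∈ ({u, v} : Set α)ᶜ) (h : f x ∈ S.verts u w huw ∪ S.verts v w hvw) :
    x = w := by
  rcases h with h | h
  · exact (S.root_mem u w huw x h).resolve_left fun h => by simp [h] at hx
  · exact (S.root_mem v w hvw x h).resolve_left fun h => by simp [h] at hx

theorem notMem_verts_of_mem_compl (S : HScheme H G f) {x y a b : α} (h : H.Adj x y)
    (hab : H.Adj a b) (hx : x ∈ ({a, b} : Set α)ᶜ) (hy : y ∈ ({a, b} : Set α)ᶜ) :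
    ∀ t ∈ (S.path x y h).support, t ∉ S.verts a b hab := fun t ht htab => by
  obtain ⟨z, hz, hz'⟩ := S.exists_common_endpoint h hab ht htab
  rcases hz with rfl | rfl <;> simp_all

theorem nonempty_induce_isolate_map_contractMap (S : HScheme H G f) (huv : H.Adj u v)
    (huw : H.Adj u w) (hvw : H.Adj v w) {K : Set β} (hwK : f w ∈ K)
    (hK : K ⊆ S.verts u w huw ∪ S.verts v w hvw) (hKA : Disjoint K (S.verts u v huv)) :
    Nonempty (HScheme (H.induce ({u, v} : Set α)ᶜ)
      ((G.isolate (S.verts u v huv)).map (contractMap K (f w)))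
      ((Function.Embedding.subtype _).trans f)) := by
  have hw : w ∈ ({u, v} : Set α)ᶜ := by simp [huw.ne', hvw.ne']
  have reroute : ∀ y (h : H.Adj w y), y ∈ ({u, v} : Set α)ᶜ →
      ∃ Q : ((G.isolate (S.verts u v huv)).map (contractMap K (f w))).Walk (f w) (f y),
        Q.IsPath ∧ ∀ t ∈ Q.support, t ∈ (S.path w y h).support := fun y h hy =>
    (S.path w y h).exists_isPath_isolate_map_contractMap (S.path_isPath w y h) hwK
      (fun hyK => h.ne' (S.eq_of_root_mem_verts_union huw hvw hy (hK hyK)))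
      (S.notMem_verts_of_mem_compl h huv hw hy) hKA
  refine S.nonempty_induce_of_subpaths _ fun ⟨x, hx⟩ ⟨y, hy⟩ h => ?_
  change H.Adj x y at h
  by_cases hxw : x = w
  · subst hxw
    exact reroute y h hy
  by_cases hyw : y = w
  · subst hyw
    obtain ⟨Q, hQ, hQsub⟩ := reroute x h.symm hx
    refine ⟨Q.reverse, hQ.reverse, fun t ht => ?_⟩
    rw [S.path_symm y x h.symm, Walk.support_reverse, List.mem_reverse]
    exact hQsub t (by simpa using ht)
  have hxyK : ∀ t ∈ (S.path x y h).support, t ∉ K := fun t ht htK => by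
    rcases hK htK with htK | htK
    · exact S.notMem_verts_of_mem_compl h huw (by simp_all) (by simp_all) t ht htK
    · exact S.notMem_verts_of_mem_compl h hvw (by simp_all) (by simp_all) t ht htK
  obtain ⟨Q, hQ⟩ := (S.path x y h).exists_support_eq_isolate_map_contractMap
    (S.notMem_verts_of_mem_compl h huv hx hy) hxyK
  refine ⟨Q, ?_, fun t ht => hQ ▸ ht⟩
  rw [Walk.isPath_def, hQ]
  exact (S.path_isPath x y h).support_nodup

theorem exists_isRootedModel_induce_disjoint [Fintype β] (S : HScheme H G f)
    (hH' : IsRootedContractible (H.induce ({u, v} : Set α)ᶜ)) (huv : H.Adj u v)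
    (huw : H.Adj u w) (hvw : H.Adj v w) (hw : w ∈ ({u, v} : Set α)ᶜ) {K : Set β}
    (hwK : f w ∈ K) (hK : K ⊆ S.verts u w huw ∪ S.verts v w hvw)
    (hKA : Disjoint K (S.verts u v huv)) (hKc : (G.induce K).Connected) :
    ∃ D : ↥({u, v} : Set α)ᶜ → Set β,
      IsRootedModel (H.induce ({u, v} : Set α)ᶜ) G ((Function.Embedding.subtype _).trans f) D ∧
      (∀ x, Disjoint (D x) (S.verts u v huv)) ∧ K ⊆ D ⟨w, hw⟩ := by
  obtain ⟨D, hD⟩ := rootedMinor_iff_exists_isRootedModel.mp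
    (hH' β _ _ (S.nonempty_induce_isolate_map_contractMap huv huw hvw hwK hK hKA))
  have hroot : ∀ x : ↥({u, v} : Set α)ᶜ, contractMap K (f w) (f x) = f x := fun x => by
    by_cases hxK : f x ∈ K
    · rw [contractMap_of_mem hxK, S.eq_of_root_mem_verts_union huw hvw x.2 (hK hxK)]
    · exact contractMap_of_notMem hxK
  have hD' := hD.of_map ((Function.Embedding.subtype _).trans f) hroot
    (preconnected_induce_preimage_contractMap (connected_induce_isolate hKc hKA) hwK)
  refine ⟨_, hD'.mono (isolate_le _), fun x => Set.disjoint_left.mpr fun t htD htA => ?_,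
    fun k hk => ?_⟩
  · exact hD'.notMem_of_forall_not_adj (fun _ h => h.2.1 htA)
      (fun h => S.root_notMem_verts huv x.2 (h ▸ htA)) htD
  · show contractMap K (f w) k ∈ D ⟨w, hw⟩
    rw [contractMap_of_mem hk]
    exact hD.root_mem ⟨w, hw⟩

def triangleComponent (S : HScheme H G f) (huv : H.Adj u v) (huw : H.Adj u w)
    (hvw : H.Adj v w) : Set β :=
  G.componentIn ((S.verts u w huw ∪ S.verts v w hvw) \ S.verts u v huv) (f w)

theorem root_mem_triangle_diff (S : HScheme H G f) (huv : H.Adj u v) (huw : H.Adj u w)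
    (hvw : H.Adj v w) : f w ∈ (S.verts u w huw ∪ S.verts v w hvw) \ S.verts u v huv :=
  ⟨Or.inl (S.path u w huw).end_mem_support,
    S.root_notMem_verts huv (by simp [huw.ne', hvw.ne'])⟩

theorem exists_adj_triangleComponent (S : HScheme H G f) (huv : H.Adj u v) (huw : H.Adj u w)
    (hvw : H.Adj v w) :
    ∃ t₁ ∈ S.verts u v huv, ∃ t₂ ∈ S.verts u v huv, t₁ ≠ t₂ ∧
      (∃ k ∈ S.triangleComponent huv huw hvw, G.Adj t₁ k) ∧
      ∃ k ∈ S.triangleComponent huv huw hvw, G.Adj t₂ k := by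
  have hwM := S.root_mem_triangle_diff huv huw hvw
  have attach : ∀ {a} (p : G.Walk (f w) a),
      (∀ t ∈ p.support, t ∈ S.verts u w huw ∪ S.verts v w hvw) → a ∈ S.verts u v huv → ∃ t ∈ p.support, t ∈ S.verts u v huv ∧
        ∃ k ∈ S.triangleComponent huv huw hvw, G.Adj t k := by
    intro a p hp ha
    obtain ⟨k, hk, t, ht, htM, hkt⟩ :=
      exists_adj_notMem_of_notMem_componentIn p hwM fun h => (componentIn_subset h).2 ha
    exact ⟨t, ht, by_contra fun htA => htM ⟨hp t ht, htA⟩, k, hk, hkt.symm⟩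
  obtain ⟨t₁, ht₁, ht₁A, hk₁⟩ := attach (S.path u w huw).reverse
    (fun t ht => Or.inl (by simpa [verts] using ht)) (S.path u v huv).start_mem_support
  obtain ⟨t₂, ht₂, ht₂A, hk₂⟩ := attach (S.path v w hvw).reverse
    (fun t ht => Or.inr (by simpa [verts] using ht)) (S.path u v huv).end_mem_support
  refine ⟨t₁, ht₁A, t₂, ht₂A, fun h => ?_, hk₁, hk₂⟩
  subst h
  obtain ⟨z, hz⟩ := S.common_endpoint t₁ ⟨u, v, huv, ht₁A⟩
  have h₁ := hz u v huv ht₁A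
  have h₂ := hz u w huw (by simpa using ht₁)
  have h₃ := hz v w hvw (by simpa using ht₂)
  rcases h₁ with rfl | rfl
  · exact h₃.elim huv.ne huw.ne
  · exact h₂.elim huv.ne' hvw.ne

end HScheme

section Triangle

variable {α : Type} [Fintype α] {H : SimpleGraph α} [DecidableRel H.Adj] {u v w : α}

theorem eq_of_adj_of_triangle (huv : H.Adj u v) (hvw : H.Adj v w) (huw : H.Adj u w)
    (hdu : H.degree u = 2) (hdv : H.degree v = 2) {x y : α} (hx : x ∉ ({u, v} : Set α)ᶜ)
    (hy : y ∈ ({u, v} : Set α)ᶜ) (h : H.Adj x y) : y = w := by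
  rw [Set.notMem_compl_iff] at hx
  simp only [Set.mem_compl_iff, Set.mem_insert_iff, Set.mem_singleton_iff, not_or] at hx hy
  rcases hx with rfl | rfl
  · exact (eq_or_eq_of_adj_of_degree_eq_two hdu huv huw hvw.ne h).resolve_left hy.2
  · exact (eq_or_eq_of_adj_of_degree_eq_two hdv huv.symm hvw huw.ne h).resolve_left hy.1

theorem rootedMinor_of_isRootedModel_induce_of_path (huv : H.Adj u v) (hvw : H.Adj v w)
    (huw : H.Adj u w) (hdu : H.degree u = 2) (hdv : H.degree v = 2) {β : Type}
    {G : SimpleGraph β} {f : α ↪ β} (hw : w ∈ ({u, v} : Set α)ᶜ)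
    {D : ↥({u, v} : Set α)ᶜ → Set β}
    (hD : IsRootedModel (H.induce ({u, v} : Set α)ᶜ) G ((Function.Embedding.subtype _).trans f) D)
    {P : G.Walk (f u) (f v)} (hP : P.IsPath) (hDP : ∀ x, ∀ t ∈ P.support, t ∉ D x)
    {t₁ t₂ : β} (ht₁ : t₁ ∈ P.support) (ht₂ : t₂ ∈ P.support) (hne : t₁ ≠ t₂)
    (h₁ : ∃ k ∈ D ⟨w, hw⟩, G.Adj t₁ k) (h₂ : ∃ k ∈ D ⟨w, hw⟩, G.Adj t₂ k) :
    RootedMinor H G f := by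
  classical
  obtain ⟨c, d, q, hcd, r, rfl, ⟨a, ha, ka, hka, hak⟩, ⟨b, hb, kb, hkb, hbk⟩⟩ :=
    P.exists_eq_append_cons_of_mem_of_mem (N := {t | ∃ k ∈ D ⟨w, hw⟩, G.Adj t k})
      ht₁ ht₂ h₁ h₂ hne
  have hqr : Disjoint {t | t ∈ q.support} {t | t ∈ r.support} :=
    Set.disjoint_left.mpr fun _ htq htr => hP.disjoint_support_of_append_cons htq htr
  have hpair : ∀ x ∉ ({u, v} : Set α)ᶜ, x = u ∨ x = v := fun x hx => by
    rwa [Set.notMem_compl_iff] at hx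
  refine rootedMinor_iff_exists_isRootedModel.mpr ⟨_, hD.glue
    (E := fun x => if x = u then {t | t ∈ q.support} else {t | t ∈ r.support})
    (fun x hx => ?_) (fun x hx => ?_) (fun x hx y hy hxy => ?_)
    (fun x y hy => Set.disjoint_left.mpr fun t htD htE => ?_) fun x hx y h => ?_⟩
  · rcases hpair x hx with rfl | rfl
    · simp
    · simp [huv.ne']
  · rcases hpair x hx with rfl | rfl
    · rw [if_pos rfl]
      exact q.connected_induce_support
    · rw [if_neg huv.ne']
      exact r.connected_induce_support
  · rcases hpair x hx with rfl | rfl <;> rcases hpair y hy with rfl | rfl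
    · exact absurd rfl hxy
    · simpa [huv.ne'] using hqr
    · simpa [huv.ne'] using hqr.symm
    · exact absurd rfl hxy
  · refine hDP x t ?_ htD
    split_ifs at htE <;> simp_all [Walk.support_append]
  · by_cases hy : y ∈ ({u, v} : Set α)ᶜ
    · obtain rfl := eq_of_adj_of_triangle huv hvw huw hdu hdv hx hy h
      rcases hpair x hx with rfl | rfl
      · exact ⟨a, by simpa using ha, ka, by simpa [hy] using hka, hak⟩
      · exact ⟨b, by simpa [huv.ne'] using hb, kb, by simpa [hy] using hkb, hbk⟩
    · rcases hpair x hx with rfl | rfl <;> rcases hpair y hy with rfl | rfl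
      · exact absurd rfl h.ne
      · exact ⟨c, by simp, d, by simp [hy, huv.ne'], hcd⟩
      · exact ⟨d, by simp [huv.ne'], c, by simp [hy], hcd.symm⟩
      · exact absurd rfl h.ne

theorem IsRootedContractible.of_induce_compl_of_triangle
    (hH' : IsRootedContractible (H.induce ({u, v} : Set α)ᶜ)) (huv : H.Adj u v)
    (hvw : H.Adj v w) (huw : H.Adj u w) (hdu : H.degree u = 2) (hdv : H.degree v = 2) :
    IsRootedContractible H := by
  intro β _ G f ⟨S⟩
  have hw : w ∈ ({u, v} : Set α)ᶜ := by simp [huw.ne', hvw.ne']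
  have hwM := S.root_mem_triangle_diff huv huw hvw
  have hKM : S.triangleComponent huv huw hvw ⊆ _ := componentIn_subset
  obtain ⟨D, hD, hDA, hKD⟩ := S.exists_isRootedModel_induce_disjoint hH' huv huw hvw hw
    (mem_componentIn_self hwM) (fun k hk => (hKM hk).1)
    (Set.disjoint_left.mpr fun k hk => (hKM hk).2) (connected_induce_componentIn hwM)
  obtain ⟨t₁, ht₁, t₂, ht₂, hne, ⟨k₁, hk₁, h₁⟩, ⟨k₂, hk₂, h₂⟩⟩ :=
    S.exists_adj_triangleComponent huv huw hvw
  exact rootedMinor_of_isRootedModel_induce_of_path huv hvw huw hdu hdv hw hD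
    (S.path_isPath u v huv) (fun x t ht htD => Set.disjoint_left.mp (hDA x) htD ht) ht₁ ht₂ hne
    ⟨k₁, hKD hk₁, h₁⟩ ⟨k₂, hKD hk₂, h₂⟩

end Triangle

theorem triangle_rooted_contractible_iff_general {α : Type} [Fintype α]
    (H : SimpleGraph α) [DecidableRel H.Adj] (u v w : α)
    (huv : H.Adj u v) (hvw : H.Adj v w) (huw : H.Adj u w)
    (hdu : H.degree u = 2) (hdv : H.degree v = 2) :
    IsRootedContractible H ↔ IsRootedContractible (H.induce ({u, v} : Set α)ᶜ) :=
  ⟨fun hH => hH.induce_of_forall_adj (w := w) (by simp [huw.ne', hvw.ne'])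
      fun _ hx _ hy h => eq_of_adj_of_triangle huv hvw huw hdu hdv hx hy h,
    fun hH' => hH'.of_induce_compl_of_triangle huv hvw huw hdu hdv⟩

/-- If `H` contains a triangle `u v w` with `u` and `v` of degree 2
in `H`, then `H` is rooted-contractible iff `H − {u, v}` is rooted-contractible. -/
theorem triangle_rooted_contractible_iff {α : Type} [Fintype α] [DecidableEq α]
    (H : SimpleGraph α) [DecidableRel H.Adj] (u v w : α)
    (huv : H.Adj u v) (hvw : H.Adj v w) (huw : H.Adj u w)
    (hdu : H.degree u = 2) (hdv : H.degree v = 2) :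
    IsRootedContractible H ↔ IsRootedContractible (H.induce ({u, v} : Set α)ᶜ) :=
  triangle_rooted_contractible_iff_general H u v w huv hvw huw hdu hdv
end
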